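/- For every z ∈ Ĥ whose continued fraction algorithm does not terminate, the series Σ_{i=1}^∞ deg(f_i) of degrees of its continued fraction coefficients diverges to ∞, and z is the limit of its approximants x_n(z) = [f₀, …, f_n]. -/

import Mathlib

universe u

/-- Evaluation of a finite continued fraction `[f₀, f₁, …, f_N]` in a field,
`cfEval [a] = a`, `cfEval (a :: l) = a + (cfEval l)⁻¹` (with the convention `0⁻¹ = 0`). -/
def cfEval {L : Type u} [Field L] : List L → L
  | [] => 0
  | a :: l => a + (cfEval l)⁻¹

/-- The Moebius maps `ρ_n = σ_n ∘ ⋯ ∘ σ_0`, where `σ_i x = (x - f_i)⁻¹`. -/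
def rho {L : Type u} [Field L] (f : ℕ → L) : ℕ → L → L
  | 0, x => (x - f 0)⁻¹
  | n + 1, x => (rho f n x - f (n + 1))⁻¹

/-- The derivative `ρ_n'` of `ρ_n`, computed by the chain rule from
`σ_i'(x) = -((x - f_i)⁻¹)²`. -/
def rho' {L : Type u} [Field L] (f : ℕ → L) : ℕ → L → L
  | 0, x => -((x - f 0)⁻¹) ^ 2
  | n + 1, x => -((rho f n x - f (n + 1))⁻¹) ^ 2 * rho' f n x

/-- An abstract presentation of the completion `K̂` of the Puiseux field
`E⟨⟨t⁻¹⟩⟩` over a field `E`.  The field `K` carries an additive valuation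
`ν` with values in `ℚ` on nonzero elements (normalized by `ν (t^r) = -r`,
where `mono r` plays the role of the monomial `t^r`), the subfield `E` is
embedded via `emb`, the simple "Laurent Puiseux polynomials" (the ring
generated by `E` and all rational powers of `t`) are dense, and `K` is
complete for `ν`. -/
structure PuiseuxCompletion (E : Type u) [Field E] where
  K : Type u
  [fieldK : Field K]
  ν : K → ℚ
  emb : E →+* K
  mono : ℚ → K
  mono_zero : mono 0 = 1
  mono_mul : ∀ r s : ℚ, mono r * mono s = mono (r + s)
  ν_mono : ∀ r : ℚ, ν (mono r) = -r
  ν_emb : ∀ e : E, e ≠ 0 → ν (emb e) = 0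
  ν_mul : ∀ x y : K, x ≠ 0 → y ≠ 0 → ν (x * y) = ν x + ν y
  ν_add : ∀ x y : K, x ≠ 0 → y ≠ 0 → x + y ≠ 0 → min (ν x) (ν y) ≤ ν (x + y)
  dense' : ∀ z : K, ∀ C : ℚ,
    ∃ f ∈ Subring.closure (Set.range emb ∪ Set.range mono), z = f ∨ C < ν (z - f)
  complete' : ∀ uSeq : ℕ → K,
    (∀ C : ℚ, ∃ N : ℕ, ∀ m ≥ N, ∀ n ≥ N, uSeq m = uSeq n ∨ C < ν (uSeq m - uSeq n)) →
    ∃ z : K, ∀ C : ℚ, ∃ N : ℕ, ∀ n ≥ N, uSeq n = z ∨ C < ν (uSeq n - z)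

attribute [instance] PuiseuxCompletion.fieldK

namespace PuiseuxCompletion

variable {E : Type u} [Field E] (P : PuiseuxCompletion E)

/-- The ring `Ā = E⟨t⟩` of Puiseux polynomials: finite `E`-linear combinations of
nonnegative rational powers of `t`. -/
def Abar : Subring P.K :=
  Subring.closure (Set.range P.emb ∪ P.mono '' {r : ℚ | 0 ≤ r})

/-- `deg f = -ν f`. -/
def deg (f : P.K) : ℚ := -P.ν f

/-- The rational Puiseux field `k̃ = Quot(Ā) = ⋃ₙ E(t^{1/n})`, as a subfield of `K̂`. -/
def ktilde : Subfield P.K := Subfield.closure (P.Abar : Set P.K)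

/-- `uSeq n → z` with respect to the valuation `ν`. -/
def TendsTo (uSeq : ℕ → P.K) (z : P.K) : Prop :=
  ∀ C : ℚ, ∃ N : ℕ, ∀ n ≥ N, uSeq n = z ∨ C < P.ν (uSeq n - z)

/-- One step of the continued fraction algorithm succeeds at index `i`:
`f i` is the Puiseux polynomial with `ν (z_i - f i) > 0`, the fraction does not
end at `i` (`z_i ≠ f i`), and `z_{i+1} = (z_i - f i)⁻¹`. -/
def CFStep (f zs : ℕ → P.K) (i : ℕ) : Prop :=
  f i ∈ P.Abar ∧ 0 < P.ν (zs i - f i) ∧ zs i ≠ f i ∧ zs (i + 1) = (zs i - f i)⁻¹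

/-- The `n`-th approximant `x_n = [f₀, …, f_n]_{ev}`. -/
def approx (f : ℕ → P.K) (n : ℕ) : P.K :=
  cfEval (List.ofFn fun i : Fin (n + 1) => f i)

/-- The continued fraction of `z` begins with the coefficients `f 0, …, f n`. -/
def CFBegins (f : ℕ → P.K) (n : ℕ) (z : P.K) : Prop :=
  ∃ zs : ℕ → P.K, zs 0 = z ∧ (∀ i < n, P.CFStep f zs i) ∧
    f n ∈ P.Abar ∧ (zs n = f n ∨ 0 < P.ν (zs n - f n))

/-- `z` is the value of the continued fraction expression with coefficients `f`
and length `L` (finite or infinite); the coefficients are Puiseux polynomials of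
positive degree after the zeroth one. -/
def CFExprEval (f : ℕ → P.K) (L : WithTop ℕ) (z : P.K) : Prop :=
  f 0 ∈ P.Abar ∧
  (∀ i : ℕ, 1 ≤ i → (i : WithTop ℕ) ≤ L → f i ∈ P.Abar ∧ 0 < P.deg (f i)) ∧
  ((∃ N : ℕ, L = (N : WithTop ℕ) ∧ z = P.approx f N) ∨
    (L = ⊤ ∧ P.TendsTo (fun n => P.approx f n) z))

/-- The equivalence relation `(a, r) ~ (a', r')` iff `r = r'` and `ν (a - a') ≥ r`
(the pairs define the same Berkovich point `η_{a,r}` of type II or III). -/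
def ballEquiv (p q : P.K × ℝ) : Prop :=
  p.2 = q.2 ∧ (p.1 = q.1 ∨ p.2 ≤ (P.ν (p.1 - q.1) : ℝ))

open scoped Classical in
/-- The Berkovich hyperbolic distance, computed on representatives. -/
noncomputable def berkDist (p q : P.K × ℝ) : ℝ :=
  if p.1 = q.1 ∨ min p.2 q.2 ≤ (P.ν (p.1 - q.1) : ℝ) then |p.2 - q.2|
  else p.2 + q.2 - 2 * (P.ν (p.1 - q.1) : ℝ)

/-- The closed ball `B_a^{[r]} = {b : ν (b - a) ≥ r}` corresponding to `η_{a,r}`. -/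
def closedBall (a : P.K) (r : ℝ) : Set P.K :=
  {b : P.K | b = a ∨ r ≤ (P.ν (b - a) : ℝ)}

/-- The Moebius transformation associated to a `2 × 2` matrix. -/
def mob (g : Matrix (Fin 2) (Fin 2) P.K) (x : P.K) : P.K :=
  (g 0 0 * x + g 0 1) / (g 1 0 * x + g 1 1)

/-- The ring `A_M = E[t^{1/M}]`. -/
def AM (M : ℕ) : Subring P.K :=
  Subring.closure (Set.range P.emb ∪ {P.mono (1 / (M : ℚ))})

/-- The field `E(t^{1/M})`, whose `ν`-completion inside `K̂` is `K_M = E((t^{-1/M}))`. -/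
def kM (M : ℕ) : Subfield P.K :=
  Subfield.closure (Set.range P.emb ∪ {P.mono (1 / (M : ℚ))})

/-!
Writing `z_{n+1} = (z_n - f_n)⁻¹`, induction on `n` gives
`ν (x_n - z) = 2 (deg f_1 + ⋯ + deg f_n) + deg f_{n+1}`, so convergence follows from the
divergence of the degree sum. If that sum stayed below `C`, approximate `z` to order `2C` by
some `g ∈ E(t^{1/M})` and run the algorithm on `g` alongside `z`: at step `n` the two remainders
still agree beyond order `2 (C - deg f_1 - ⋯ - deg f_n) > 0`, so every `f_n` is the polynomial
part of an element of `E(t^{1/M})`. Hence `f_n ∈ E[t^{1/M}]`, its degree is at least `1/M`, and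
the sum diverges after all.
-/

lemma ν_one : P.ν 1 = 0 := by
  simpa [P.mono_zero] using P.ν_mono 0

lemma mono_ne_zero (r : ℚ) : P.mono r ≠ 0 :=
  left_ne_zero_of_mul_eq_one (b := P.mono (-r)) (by rw [P.mono_mul, add_neg_cancel, P.mono_zero])

lemma ν_neg {x : P.K} (hx : x ≠ 0) : P.ν (-x) = P.ν x := by
  have h1 : P.ν (-1 : P.K) = 0 := by
    have := P.ν_mul (-1) (-1) (by simp) (by simp)
    rw [neg_mul_neg, one_mul, P.ν_one] at this
    linarith
  rw [← neg_one_mul, P.ν_mul _ _ (by simp) hx, h1, zero_add]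

lemma ν_sub_comm {x y : P.K} (h : x ≠ y) : P.ν (x - y) = P.ν (y - x) := by
  rw [← neg_sub, P.ν_neg (sub_ne_zero.mpr h.symm)]

lemma ν_inv {x : P.K} (hx : x ≠ 0) : P.ν x⁻¹ = -P.ν x := by
  have := P.ν_mul x x⁻¹ hx (inv_ne_zero hx)
  rw [mul_inv_cancel₀ hx, P.ν_one] at this
  linarith

lemma ν_div {x y : P.K} (hx : x ≠ 0) (hy : y ≠ 0) : P.ν (x / y) = P.ν x - P.ν y := by
  rw [div_eq_mul_inv, P.ν_mul _ _ hx (inv_ne_zero hy), P.ν_inv hy, sub_eq_add_neg]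

lemma ν_pow {x : P.K} (hx : x ≠ 0) (n : ℕ) : P.ν (x ^ n) = n * P.ν x := by
  induction n with
  | zero => simp [P.ν_one]
  | succ n ih => rw [pow_succ, P.ν_mul _ _ (pow_ne_zero _ hx) hx, ih]; push_cast; ring

lemma add_ne_zero_of_ν_lt {x y : P.K} (hx : x ≠ 0) (h : P.ν x < P.ν y) : x + y ≠ 0 := by
  intro hxy
  rw [eq_neg_of_add_eq_zero_right hxy, P.ν_neg hx] at h
  exact h.false

lemma ν_add_eq_of_lt {x y : P.K} (hx : x ≠ 0) (hy : y ≠ 0) (h : P.ν x < P.ν y) :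
    P.ν (x + y) = P.ν x := by
  have hxy := P.add_ne_zero_of_ν_lt hx h
  have hle : P.ν x ≤ P.ν (x + y) := by simpa [h.le] using P.ν_add x y hx hy hxy
  have hge := P.ν_add (x + y) (-y) hxy (neg_ne_zero.mpr hy) (by simpa using hx)
  rw [add_neg_cancel_right, P.ν_neg hy] at hge
  by_contra hne
  exact (lt_min (lt_of_le_of_ne hle (Ne.symm hne)) h).not_ge hge

/-- `x` and `y` agree beyond order `c`: `ν (x - y) > c`, with the convention `ν 0 = ∞`. -/
def Close (c : ℚ) (x y : P.K) : Prop :=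
  x = y ∨ c < P.ν (x - y)

section Close

variable {P}

lemma Close.symm {c : ℚ} {x y : P.K} (h : P.Close c x y) : P.Close c y x := by
  rcases h with rfl | h
  · exact Or.inl rfl
  · by_cases hxy : x = y
    · exact Or.inl hxy.symm
    · exact Or.inr (P.ν_sub_comm hxy ▸ h)

lemma Close.mono {c c' : ℚ} {x y : P.K} (h : P.Close c x y) (hc : c' ≤ c) : P.Close c' x y :=
  h.imp_right hc.trans_lt

lemma Close.trans {c : ℚ} {x y w : P.K} (hxy : P.Close c x y) (hyw : P.Close c y w) :
    P.Close c x w := by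
  rcases eq_or_ne x y with rfl | hxy'
  · exact hyw
  rcases eq_or_ne y w with rfl | hyw'
  · exact hxy
  rcases eq_or_ne x w with hxw | hxw
  · exact Or.inl hxw
  have h := P.ν_add (x - y) (y - w) (sub_ne_zero.mpr hxy') (sub_ne_zero.mpr hyw')
    (by simpa using sub_ne_zero.mpr hxw)
  rw [sub_add_sub_cancel] at h
  exact Or.inr ((lt_min (hxy.resolve_left hxy') (hyw.resolve_left hyw')).trans_le h)

end Close

lemma mono_pow (r : ℚ) (n : ℕ) : P.mono r ^ n = P.mono (n * r) := by
  induction n with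
  | zero => simp [P.mono_zero]
  | succ n ih => rw [pow_succ, ih, P.mono_mul]; push_cast; ring_nf

section PuiseuxPolynomials

open Polynomial

lemma emb_mem_AM (M : ℕ) (e : E) : P.emb e ∈ P.AM M :=
  Subring.subset_closure (Or.inl ⟨e, rfl⟩)

lemma mono_mem_AM (M : ℕ) : P.mono (1 / M) ∈ P.AM M :=
  Subring.subset_closure (Or.inr rfl)

lemma mem_AM_iff {M : ℕ} {x : P.K} :
    x ∈ P.AM M ↔ ∃ p : E[X], p.eval₂ P.emb (P.mono (1 / M)) = x := by
  constructor
  · intro hx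
    refine (Subring.closure_le (t := (eval₂RingHom P.emb (P.mono (1 / M))).range)).mpr ?_ hx
    rintro _ (⟨e, rfl⟩ | rfl)
    · exact ⟨C e, eval₂_C _ _⟩
    · exact ⟨X, eval₂_X _ _⟩
  · rintro ⟨p, rfl⟩
    induction p using Polynomial.induction_on' with
    | add p q hp hq => rw [eval₂_add]; exact add_mem hp hq
    | monomial n a =>
      rw [eval₂_monomial]
      exact mul_mem (P.emb_mem_AM M a) (pow_mem (P.mono_mem_AM M) n)

lemma eval₂_mono_ne_zero_and_ν {r : ℚ} (hr : 0 < r) {p : E[X]} (hp : p ≠ 0) :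
    p.eval₂ P.emb (P.mono r) ≠ 0 ∧
      P.ν (p.eval₂ P.emb (P.mono r)) = -(p.natDegree * r) := by
  refine induction_with_natDegree_le (fun p => p ≠ 0 → p.eval₂ P.emb (P.mono r) ≠ 0 ∧
    P.ν (p.eval₂ P.emb (P.mono r)) = -(p.natDegree * r)) p.natDegree (absurd rfl)
    ?_ ?_ p le_rfl hp
  · intro n a ha _ _
    have hxn : P.mono r ^ n ≠ 0 := pow_ne_zero _ (P.mono_ne_zero r)
    have hea : P.emb a ≠ 0 := (_root_.map_ne_zero _).mpr ha
    simp only [eval₂_mul, eval₂_C, eval₂_X_pow, natDegree_C_mul_X_pow n a ha]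
    refine ⟨mul_ne_zero hea hxn, ?_⟩
    rw [P.ν_mul _ _ hea hxn, P.ν_emb a ha, P.ν_pow (P.mono_ne_zero r), P.ν_mono]
    ring
  · intro f g hfg _ ihf ihg _
    have hg : g ≠ 0 := by rintro rfl; simp at hfg
    obtain ⟨hg0, hgν⟩ := ihg hg
    rw [eval₂_add, natDegree_add_eq_right_of_natDegree_lt hfg, add_comm]
    rcases eq_or_ne f 0 with rfl | hf
    · simpa using ⟨hg0, hgν⟩
    obtain ⟨hf0, hfν⟩ := ihf hf
    have hlt : P.ν (g.eval₂ P.emb (P.mono r)) < P.ν (f.eval₂ P.emb (P.mono r)) := by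
      rw [hfν, hgν, neg_lt_neg_iff]
      exact mul_lt_mul_of_pos_right (by exact_mod_cast hfg) hr
    exact ⟨P.add_ne_zero_of_ν_lt hg0 hlt, by rw [P.ν_add_eq_of_lt hg0 hf0 hlt, hgν]⟩

lemma exists_deg_eq_of_mem_AM {M : ℕ} (hM : 0 < M) {x : P.K} (hx : x ∈ P.AM M) (hx0 : x ≠ 0) :
    ∃ d : ℕ, P.deg x = d / M := by
  obtain ⟨p, rfl⟩ := P.mem_AM_iff.mp hx
  have hp : p ≠ 0 := by rintro rfl; simp at hx0
  refine ⟨p.natDegree, ?_⟩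
  rw [deg, (P.eval₂_mono_ne_zero_and_ν (by positivity) hp).2]
  ring

lemma one_div_le_deg_of_mem_AM {M : ℕ} (hM : 0 < M) {x : P.K} (hx : x ∈ P.AM M) (hx0 : x ≠ 0)
    (hdeg : 0 < P.deg x) : 1 / (M : ℚ) ≤ P.deg x := by
  obtain ⟨d, hd⟩ := P.exists_deg_eq_of_mem_AM hM hx hx0
  rw [hd] at hdeg ⊢
  have hd1 : (1 : ℚ) ≤ d := by
    exact_mod_cast Nat.one_le_iff_ne_zero.mpr (by rintro rfl; simp at hdeg)
  gcongr

lemma AM_le_Abar (M : ℕ) : P.AM M ≤ P.Abar :=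
  Subring.closure_mono <| Set.union_subset_union_right _ <|
    Set.singleton_subset_iff.mpr ⟨1 / M, (by positivity : (0 : ℚ) ≤ 1 / M), rfl⟩

lemma AM_le_kM (M : ℕ) : P.AM M ≤ (P.kM M).toSubring :=
  Subfield.subring_closure_le _

lemma AM_mono {M N : ℕ} (hN : 0 < N) (h : M ∣ N) : P.AM M ≤ P.AM N := by
  obtain ⟨k, rfl⟩ := h
  refine Subring.closure_le.mpr (Set.union_subset (Set.range_subset_iff.mpr (P.emb_mem_AM _))
    (Set.singleton_subset_iff.mpr ?_))
  have hk : (k : ℚ) ≠ 0 := by norm_cast; rintro rfl; simp at hN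
  have : P.mono (1 / (M : ℚ)) = P.mono (1 / ((M * k : ℕ) : ℚ)) ^ k := by
    rw [P.mono_pow]; congr 1; push_cast; field_simp
  exact this ▸ pow_mem (P.mono_mem_AM _) k

lemma kM_mono {M N : ℕ} (hN : 0 < N) (h : M ∣ N) : P.kM M ≤ P.kM N :=
  Subfield.closure_le.mpr fun _ hx =>
    P.AM_le_kM N (P.AM_mono hN h (Subring.subset_closure hx))

lemma directed_AM : Directed (· ≤ ·) fun M : ℕ+ => P.AM M := fun M N =>
  ⟨M * N, P.AM_mono (M * N).pos (by simp), P.AM_mono (M * N).pos (by simp)⟩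

lemma directed_kM : Directed (· ≤ ·) fun M : ℕ+ => P.kM M := fun M N =>
  ⟨M * N, P.kM_mono (M * N).pos (by simp), P.kM_mono (M * N).pos (by simp)⟩

lemma mono_mem_AM_den {r : ℚ} (hr : 0 ≤ r) : P.mono r ∈ P.AM r.den := by
  have : P.mono r = P.mono (1 / (r.den : ℚ)) ^ r.num.toNat := by
    rw [P.mono_pow, ← Int.cast_natCast, Int.toNat_of_nonneg (Rat.num_nonneg.mpr hr), mul_one_div,
      Rat.num_div_den]
  rw [this]
  exact pow_mem (P.mono_mem_AM _) _

lemma mono_mem_kM_den (r : ℚ) : P.mono r ∈ P.kM r.den := by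
  rcases le_or_gt 0 r with hr | hr
  · exact P.AM_le_kM _ (P.mono_mem_AM_den hr)
  · have : P.mono r = (P.mono (-r))⁻¹ :=
      eq_inv_of_mul_eq_one_left (by rw [P.mono_mul, add_neg_cancel, P.mono_zero])
    rw [this, ← Rat.den_neg_eq_den]
    exact inv_mem (P.AM_le_kM _ (P.mono_mem_AM_den (by linarith)))

lemma exists_mem_AM_of_mem_Abar {x : P.K} (hx : x ∈ P.Abar) : ∃ M : ℕ+, x ∈ P.AM M := by
  refine (Subring.mem_iSup_of_directed P.directed_AM).mp (Subring.closure_le.mpr ?_ hx)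
  rintro _ (⟨e, rfl⟩ | ⟨r, hr, rfl⟩)
  · exact le_iSup (fun M : ℕ+ => P.AM M) 1 (P.emb_mem_AM 1 e)
  · exact le_iSup (fun M : ℕ+ => P.AM M) r.pnatDen (P.mono_mem_AM_den hr)

lemma exists_mem_kM_of_mem_closure {x : P.K}
    (hx : x ∈ Subring.closure (Set.range P.emb ∪ Set.range P.mono)) :
    ∃ M : ℕ+, x ∈ P.kM M := by
  refine (Subfield.mem_iSup_of_directed P.directed_kM).mp
    ((Subring.closure_le (t := (⨆ M : ℕ+, P.kM M).toSubring)).mpr ?_ hx)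
  rintro _ (⟨e, rfl⟩ | ⟨r, rfl⟩)
  · exact le_iSup (fun M : ℕ+ => P.kM M) 1 (Subfield.subset_closure (Or.inl ⟨e, rfl⟩))
  · exact le_iSup (fun M : ℕ+ => P.kM M) r.pnatDen (P.mono_mem_kM_den r)

lemma ν_nonpos_of_mem_Abar {x : P.K} (hx : x ∈ P.Abar) (hx0 : x ≠ 0) : P.ν x ≤ 0 := by
  obtain ⟨M, hM⟩ := P.exists_mem_AM_of_mem_Abar hx
  obtain ⟨d, hd⟩ := P.exists_deg_eq_of_mem_AM M.pos hM hx0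
  have : 0 ≤ P.deg x := hd ▸ by positivity
  rwa [deg, neg_nonneg] at this

lemma eq_of_close_of_mem_Abar {x y : P.K} (hx : x ∈ P.Abar) (hy : y ∈ P.Abar)
    (h : P.Close 0 x y) : x = y := by
  by_contra hxy
  refine (h.resolve_left hxy).not_ge ?_
  exact (P.ν_nonpos_of_mem_Abar (sub_mem hx hy) (sub_ne_zero.mpr hxy))

lemma exists_close_mem_AM_of_mem_kM {M : ℕ} (hM : 0 < M) {x : P.K} (hx : x ∈ P.kM M) :
    ∃ y ∈ P.AM M, P.Close 0 x y := by
  obtain ⟨_, ha, _, hb, rfl⟩ := Subfield.mem_closure_iff.mp hx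
  obtain ⟨a, rfl⟩ := P.mem_AM_iff.mp ha
  obtain ⟨b, rfl⟩ := P.mem_AM_iff.mp hb
  rcases eq_or_ne b 0 with rfl | hb0
  · exact ⟨0, zero_mem _, Or.inl (by simp)⟩
  set φ := eval₂RingHom P.emb (P.mono (1 / M))
  change ∃ y ∈ P.AM M, P.Close 0 (φ a / φ b) y
  refine ⟨φ (a / b), P.mem_AM_iff.mpr ⟨_, rfl⟩, ?_⟩
  have hr : (0 : ℚ) < 1 / M := by positivity
  obtain ⟨hb', hbν⟩ : φ b ≠ 0 ∧ P.ν (φ b) = _ := P.eval₂_mono_ne_zero_and_ν hr hb0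
  have hsub : φ a / φ b - φ (a / b) = φ (a % b) / φ b := by
    rw [EuclideanDomain.mod_eq_sub_mul_div, map_sub, map_mul]
    field_simp
  rcases eq_or_ne (a % b) 0 with hmod | hmod
  · left
    rwa [hmod, map_zero, zero_div, sub_eq_zero] at hsub
  · obtain ⟨hm', hmν⟩ : φ (a % b) ≠ 0 ∧ P.ν (φ (a % b)) = _ :=
      P.eval₂_mono_ne_zero_and_ν hr hmod
    have hdeg : ((a % b).natDegree : ℚ) < b.natDegree := by
      exact_mod_cast natDegree_lt_natDegree hmod (degree_mod_lt a hb0)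
    right
    rw [hsub, P.ν_div hm' hb', hmν, hbν]
    nlinarith

end PuiseuxPolynomials

lemma mem_AM_of_close {M : ℕ} (hM : 0 < M) {g z a : P.K} (hg : g ∈ P.kM M) (ha : a ∈ P.Abar)
    (hgz : P.Close 0 g z) (hza : 0 < P.ν (z - a)) : a ∈ P.AM M := by
  obtain ⟨y, hy, hgy⟩ := P.exists_close_mem_AM_of_mem_kM hM hg
  rwa [P.eq_of_close_of_mem_Abar ha (P.AM_le_Abar M hy) ((hgz.trans (Or.inr hza)).symm.trans hgy)]

lemma close_inv_sub {c : ℚ} {g z a : P.K} (hza : z ≠ a) (hc : P.ν (z - a) < c)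
    (h : P.Close c g z) : P.Close (c - 2 * P.ν (z - a)) (g - a)⁻¹ (z - a)⁻¹ := by
  rcases eq_or_ne g z with rfl | hgz
  · exact Or.inl rfl
  have hw : z - a ≠ 0 := sub_ne_zero.mpr hza
  have hε : g - z ≠ 0 := sub_ne_zero.mpr hgz
  have hlt : P.ν (z - a) < P.ν (g - z) := hc.trans (h.resolve_left hgz)
  have hga : g - a ≠ 0 := by simpa using P.add_ne_zero_of_ν_lt hw hlt
  have hgaν : P.ν (g - a) = P.ν (z - a) := by
    simpa using P.ν_add_eq_of_lt hw hε hlt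
  have key : (g - a)⁻¹ - (z - a)⁻¹ = -(g - z) / ((g - a) * (z - a)) := by
    field_simp
    ring
  right
  rw [key, P.ν_div (neg_ne_zero.mpr hε) (mul_ne_zero hga hw), P.ν_neg hε, P.ν_mul _ _ hga hw,
    hgaν]
  linarith [h.resolve_left hgz]

lemma approx_zero (f : ℕ → P.K) : P.approx f 0 = f 0 := by
  simp [approx, cfEval]

lemma approx_succ (f : ℕ → P.K) (n : ℕ) :
    P.approx f (n + 1) = f 0 + (P.approx (fun i => f (i + 1)) n)⁻¹ := by
  simp [approx, List.ofFn_succ, cfEval]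

section ContinuedFraction

open Finset Filter

variable {P} {f zs : ℕ → P.K}

lemma coeff_succ_ne_zero_and_deg_eq {i : ℕ} (hi : P.CFStep f zs i)
    (hi' : P.CFStep f zs (i + 1)) : f (i + 1) ≠ 0 ∧ P.deg (f (i + 1)) = P.ν (zs i - f i) := by
  obtain ⟨-, hpos, hne, hnext⟩ := hi
  obtain ⟨-, hpos', hne', -⟩ := hi'
  have hw : zs i - f i ≠ 0 := sub_ne_zero.mpr hne
  have hz : zs (i + 1) ≠ 0 := hnext ▸ inv_ne_zero hw
  have hr : -(zs (i + 1) - f (i + 1)) ≠ 0 := neg_ne_zero.mpr (sub_ne_zero.mpr hne')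
  have hzν : P.ν (zs (i + 1)) = -P.ν (zs i - f i) := by rw [hnext, P.ν_inv hw]
  have hlt : P.ν (zs (i + 1)) < P.ν (-(zs (i + 1) - f (i + 1))) := by
    rw [P.ν_neg (sub_ne_zero.mpr hne'), hzν]
    linarith
  have hf : zs (i + 1) + -(zs (i + 1) - f (i + 1)) = f (i + 1) := by ring
  refine ⟨hf ▸ P.add_ne_zero_of_ν_lt hz hlt, ?_⟩
  rw [deg, ← hf, P.ν_add_eq_of_lt hz hr hlt, hzν, neg_neg]

lemma sum_Icc_deg_eq_sum_range_ν (hstep : ∀ i, P.CFStep f zs i) (n : ℕ) :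
    ∑ i ∈ Icc 1 n, P.deg (f i) = ∑ i ∈ range n, P.ν (zs i - f i) := by
  induction n with
  | zero => simp
  | succ n ih =>
    rw [sum_Icc_succ_top (by omega), ih, sum_range_succ,
      (coeff_succ_ne_zero_and_deg_eq (hstep n) (hstep (n + 1))).2]

lemma approx_ne_and_ν_approx_sub (hstep : ∀ i, P.CFStep f zs i) (n : ℕ) :
    P.approx f n ≠ zs 0 ∧
      P.ν (P.approx f n - zs 0) =
        2 * ∑ i ∈ range n, P.ν (zs i - f i) + P.ν (zs n - f n) := by
  induction n generalizing f zs with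
  | zero =>
    obtain ⟨-, -, hne, -⟩ := hstep 0
    simpa [approx_zero, P.ν_sub_comm hne.symm] using hne.symm
  | succ n ih =>
    obtain ⟨hne', hν'⟩ := ih (f := fun i => f (i + 1)) (zs := fun i => zs (i + 1))
      fun i => hstep (i + 1)
    set x := P.approx (fun i => f (i + 1)) n with hx_def
    obtain ⟨-, hpos, hne, hnext⟩ := hstep 0
    have hw : zs 0 - f 0 ≠ 0 := sub_ne_zero.mpr hne
    have hz : zs 1 ≠ 0 := hnext ▸ inv_ne_zero hw
    have hzν : P.ν (zs 1) = -P.ν (zs 0 - f 0) := by rw [hnext, P.ν_inv hw]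
    have hxz : x - zs 1 ≠ 0 := sub_ne_zero.mpr hne'
    have hlt : P.ν (zs 1) < P.ν (x - zs 1) := by
      have : 0 ≤ ∑ i ∈ range n, P.ν (zs (i + 1) - f (i + 1)) :=
        sum_nonneg fun i _ => (hstep (i + 1)).2.1.le
      rw [hν', hzν]
      linarith [(hstep (n + 1)).2.1]
    have hx : x ≠ 0 := by simpa using P.add_ne_zero_of_ν_lt hz hlt
    have hxν : P.ν x = P.ν (zs 1) := by simpa using P.ν_add_eq_of_lt hz hxz hlt
    have key : P.approx f (n + 1) - zs 0 = -(x - zs 1) / (x * zs 1) := by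
      rw [approx_succ, ← hx_def, show zs 0 = f 0 + (zs 1)⁻¹ by rw [hnext, inv_inv]; ring]
      field_simp
      ring
    have hden : x * zs 1 ≠ 0 := mul_ne_zero hx hz
    refine ⟨sub_ne_zero.mp (key ▸ div_ne_zero (neg_ne_zero.mpr hxz) hden), ?_⟩
    rw [key, P.ν_div (neg_ne_zero.mpr hxz) hden, P.ν_neg hxz, P.ν_mul _ _ hx hz, hν',
      hxν, hzν, sum_range_succ']
    ring

lemma exists_close_remainder_of_sum_le (hstep : ∀ i, P.CFStep f zs i) {C : ℚ}
    (hC : ∀ n, ∑ i ∈ range n, P.ν (zs i - f i) ≤ C) {M : ℕ} (hM : 0 < M) {g : P.K}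
    (hg : g ∈ P.kM M) (hgz : P.Close (2 * C) g (zs 0)) (n : ℕ) :
    ∃ gn ∈ P.kM M, P.Close (2 * (C - ∑ i ∈ range n, P.ν (zs i - f i))) gn (zs n) := by
  induction n with
  | zero => simpa using ⟨g, hg, hgz⟩
  | succ n ih =>
    obtain ⟨gn, hgn, hclose⟩ := ih
    obtain ⟨hfn, hpos, hne, hnext⟩ := hstep n
    have hbudget := hC (n + 1)
    rw [sum_range_succ] at hbudget
    have hfM : f n ∈ P.AM M :=
      P.mem_AM_of_close hM hgn hfn (hclose.mono (by linarith)) hpos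
    refine ⟨(gn - f n)⁻¹, inv_mem (sub_mem hgn (P.AM_le_kM M hfM)), ?_⟩
    rw [hnext, sum_range_succ]
    convert P.close_inv_sub hne (by linarith) hclose using 1
    ring

lemma coeff_mem_AM_of_sum_le (hstep : ∀ i, P.CFStep f zs i) {C : ℚ}
    (hC : ∀ n, ∑ i ∈ range n, P.ν (zs i - f i) ≤ C) {M : ℕ} (hM : 0 < M) {g : P.K}
    (hg : g ∈ P.kM M) (hgz : P.Close (2 * C) g (zs 0)) (n : ℕ) : f n ∈ P.AM M := by
  obtain ⟨gn, hgn, hclose⟩ := exists_close_remainder_of_sum_le hstep hC hM hg hgz n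
  exact P.mem_AM_of_close hM hgn (hstep n).1 (hclose.mono (by linarith [hC n])) (hstep n).2.1

lemma tendsto_sum_ν_atTop (hstep : ∀ i, P.CFStep f zs i) :
    Tendsto (fun n => ∑ i ∈ range n, P.ν (zs i - f i)) atTop atTop := by
  refine tendsto_atTop_atTop_of_monotone (monotone_nat_of_le_succ fun n => ?_) fun C => ?_
  · rw [sum_range_succ]
    linarith [(hstep n).2.1]
  by_contra! hC
  obtain ⟨g, hg, hgz⟩ := P.dense' (zs 0) (2 * C)
  obtain ⟨M, hgM⟩ := P.exists_mem_kM_of_mem_closure hg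
  have hbound : ∀ i, 1 / (M : ℚ) ≤ P.ν (zs i - f i) := fun i => by
    obtain ⟨hf0, hdeg⟩ := coeff_succ_ne_zero_and_deg_eq (hstep i) (hstep (i + 1))
    have hfM := coeff_mem_AM_of_sum_le hstep (fun n => (hC n).le) M.pos hgM (Close.symm hgz) (i + 1)
    exact hdeg ▸ P.one_div_le_deg_of_mem_AM M.pos hfM hf0 (hdeg ▸ (hstep i).2.1)
  obtain ⟨n, hn⟩ := exists_nat_gt (C * M)
  have hsum := card_nsmul_le_sum (range n) _ _ fun i _ => hbound i
  rw [card_range, nsmul_eq_mul] at hsum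
  have hM : (0 : ℚ) < M := by exact_mod_cast M.pos
  have hCn : C < n * (1 / (M : ℚ)) := by rw [mul_one_div, lt_div_iff₀ hM]; exact hn
  linarith [hC n]

end ContinuedFraction

end PuiseuxCompletion

open PuiseuxCompletion in
/-- for `z ∈ K̂` with non-terminating continued fraction,
`Σ_{i=1}^∞ deg f_i` diverges to `∞` and `z = lim x_n(z)`. -/
theorem statement7 {E : Type u} [Field E] (P : PuiseuxCompletion E)
    (z : P.K) (f zs : ℕ → P.K)
    (h0 : zs 0 = z) (hstep : ∀ i : ℕ, P.CFStep f zs i) :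
    Filter.Tendsto (fun n => ∑ i ∈ Finset.Icc 1 n, P.deg (f i))
      Filter.atTop Filter.atTop ∧
    P.TendsTo (fun n => P.approx f n) z := by
  have hdiv := tendsto_sum_ν_atTop hstep
  refine ⟨by simpa only [sum_Icc_deg_eq_sum_range_ν hstep] using hdiv, fun C => ?_⟩
  obtain ⟨N, hN⟩ := Filter.eventually_atTop.mp (hdiv.eventually_ge_atTop (C / 2))
  refine ⟨N, fun n hn => Or.inr ?_⟩
  rw [← h0, (approx_ne_and_ν_approx_sub hstep n).2]
  linarith [hN n hn, (hstep n).2.1]
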